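/- arXiv:2503.22823 — 7 statements merged into one kernel-verified Lean document; each statement's English description precedes it below -/
import Mathlib

section
/- For classical channels W₁ and W₂ on finite alphabets, the Doeblin coefficient is multiplicative under tensor products: α(W₁ ⊗ W₂) = α(W₁)·α(W₂), where (W₁⊗W₂)((y₁,y₂)|(x₁,x₂)) = W₁(y₁|x₁)W₂(y₂|x₂). -/
lemma Real.iInf_prod_mul_of_nonneg {A B : Type*} {f : A → ℝ} {g : B → ℝ}
    (hf : ∀ a, 0 ≤ f a) (hg : ∀ b, 0 ≤ g b) :
    ⨅ p : A × B, f p.1 * g p.2 = (⨅ a, f a) * ⨅ b, g b := by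
  have hbdd : BddBelow (Set.range fun p : A × B => f p.1 * g p.2) :=
    ⟨0, by rintro _ ⟨p, rfl⟩; exact mul_nonneg (hf p.1) (hg p.2)⟩
  calc ⨅ p : A × B, f p.1 * g p.2 = ⨅ a, ⨅ b, f a * g b := ciInf_prod hbdd
    _ = ⨅ a, f a * ⨅ b, g b := by simp only [Real.mul_iInf_of_nonneg (hf _)]
    _ = (⨅ a, f a) * ⨅ b, g b := (Real.iInf_mul_of_nonneg (Real.iInf_nonneg hg) f).symm

theorem stmt2_general {X₁ Y₁ X₂ Y₂ : Type} [Fintype Y₁] [Fintype Y₂]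
    (p₁ : X₁ → Y₁ → ℝ) (p₂ : X₂ → Y₂ → ℝ)
    (h₁ : ∀ x y, 0 ≤ p₁ x y) (h₂ : ∀ x y, 0 ≤ p₂ x y) :
    ∑ y : Y₁ × Y₂, ⨅ x : X₁ × X₂, p₁ x.1 y.1 * p₂ x.2 y.2
      = (∑ y₁, ⨅ x₁, p₁ x₁ y₁) * (∑ y₂, ⨅ x₂, p₂ x₂ y₂) := by
  rw [Finset.sum_mul_sum, ← Finset.sum_product', Finset.univ_product_univ]
  exact Finset.sum_congr rfl fun y _ =>
    Real.iInf_prod_mul_of_nonneg (fun x₁ => h₁ x₁ y.1) (fun x₂ => h₂ x₂ y.2)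

/-- Multiplicativity of the classical Doeblin coefficient under tensor products,
using the minimum-likelihood formula `α(W) = Σ_y min_x p(y|x)`. -/
theorem stmt2 {X₁ Y₁ X₂ Y₂ : Type} [Fintype X₁] [Fintype Y₁] [Fintype X₂] [Fintype Y₂]
    [Nonempty X₁] [Nonempty X₂]
    (p₁ : X₁ → Y₁ → ℝ) (p₂ : X₂ → Y₂ → ℝ)
    (h₁ : ∀ x y, 0 ≤ p₁ x y) (h₂ : ∀ x y, 0 ≤ p₂ x y)
    (hs₁ : ∀ x, ∑ y, p₁ x y = 1) (hs₂ : ∀ x, ∑ y, p₂ x y = 1) :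
    ∑ y : Y₁ × Y₂, ⨅ x : X₁ × X₂, p₁ x.1 y.1 * p₂ x.2 y.2
      = (∑ y₁, ⨅ x₁, p₁ x₁ y₁) * (∑ y₂, ⨅ x₂, p₂ x₂ y₂) :=
  stmt2_general p₁ p₂ h₁ h₂
end

section
/- If a quantum channel N can be written N = λ R_τ + (1−λ) M with λ ∈ [0,1], τ a trace-one Hermitian operator, R_τ(ρ) = Tr(ρ)τ, and M a CPTP map, then for all states ρ_{RA}, σ_{RA} with equal marginals ρ_R = σ_R, ‖(id_R ⊗ N)(ρ_{RA}) − (id_R ⊗ N)(σ_{RA})‖₁ ≤ (1−λ)·‖ρ_{RA} − σ_{RA}‖₁. -/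
open Matrix
open scoped ComplexOrder

/-- Partial trace over the second tensor factor (here: the marginal on `R`). -/
noncomputable def traceOutSnd {A B : Type} [Fintype B] (M : Matrix (A × B) (A × B) ℂ) :
    Matrix A A ℂ :=
  Matrix.of fun i j => ∑ b, M (i, b) (j, b)

/-- The replacer map `ρ ↦ Tr(ρ) • τ`. -/
noncomputable def replacer (A : Type) [Fintype A] {B : Type} (τ : Matrix B B ℂ) :
    Matrix A A ℂ →ₗ[ℂ] Matrix B B ℂ :=
  (Matrix.traceLinearMap A ℂ ℂ).smulRight τ

/-- The action of `id_R ⊗ Φ` on matrices over `R × A`. -/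
noncomputable def tensorId {R A B : Type} (Φ : Matrix A A ℂ →ₗ[ℂ] Matrix B B ℂ)
    (ρ : Matrix (R × A) (R × A) ℂ) : Matrix (R × B) (R × B) ℂ :=
  Matrix.of fun p q => Φ (Matrix.of fun a a' => ρ (p.1, a) (q.1, a')) p.2 q.2

/-- Completely positive and trace preserving. -/
noncomputable def IsCPTP {A B : Type} [Fintype A] [Fintype B]
    (Φ : Matrix A A ℂ →ₗ[ℂ] Matrix B B ℂ) : Prop :=
  (∀ (k : ℕ) (ρ : Matrix (Fin k × A) (Fin k × A) ℂ), ρ.PosSemidef →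
      (tensorId (R := Fin k) Φ ρ).PosSemidef) ∧
  ∀ ρ : Matrix A A ℂ, (Φ ρ).trace = ρ.trace

/-- Square root of a positive semidefinite matrix, as `Matrix.PosSemidef.sqrt` was defined in the older Mathlib. -/
noncomputable def Matrix.PosSemidef.sqrt {n 𝕜 : Type*} [Fintype n] [RCLike 𝕜] [DecidableEq n]
    {A : Matrix n n 𝕜} (hA : A.PosSemidef) : Matrix n n 𝕜 :=
  hA.1.eigenvectorUnitary.1 * diagonal ((↑) ∘ (√·) ∘ hA.1.eigenvalues) *
    (star hA.1.eigenvectorUnitary : Matrix n n 𝕜)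

/-- The trace norm `‖M‖₁ = Tr √(MᴴM)`. -/
noncomputable def traceNorm {n : Type} [Fintype n] [DecidableEq n] (M : Matrix n n ℂ) : ℝ :=
  ((Matrix.posSemidef_conjTranspose_mul_self M).sqrt).trace.re

/-!
The replacer part of `N` contributes `(ρ_R - σ_R) ⊗ τ = 0` to the difference of the outputs, so
`(id ⊗ N) ρ - (id ⊗ N) σ = (1 - λ) (id ⊗ M) (ρ - σ)`, and it remains to see that `id ⊗ M` does not
increase the trace norm of the Hermitian matrix `X = ρ - σ`. Split `X = X⁺ - X⁻` into positive and
negative parts, so that `‖X‖₁ = Tr X⁺ + Tr X⁻`. Since `id ⊗ M` is positive and trace preserving, the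
images of `X⁺, X⁻` are positive with the same traces, and `‖P - Q‖₁ ≤ Tr P + Tr Q` for any positive
`P, Q`: in an eigenbasis of `P - Q` each eigenvalue is `⟨v, P v⟩ - ⟨v, Q v⟩`.
-/

open scoped MatrixOrder Kronecker

section TraceNorm

variable {n : Type} [Fintype n] [DecidableEq n]

lemma Matrix.PosSemidef.sqrt_eq_cfcSqrt {A : Matrix n n ℂ} (hA : A.PosSemidef) :
    hA.sqrt = CFC.sqrt A := by
  rw [CFC.sqrt_eq_real_sqrt A hA.nonneg, cfcₙ_eq_cfc, hA.1.cfc_eq]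
  rfl

lemma traceNorm_eq_re_trace_abs (X : Matrix n n ℂ) : traceNorm X = (CFC.abs X).trace.re := by
  rw [traceNorm, PosSemidef.sqrt_eq_cfcSqrt]
  rfl

lemma traceNorm_smul (c : ℂ) (X : Matrix n n ℂ) : traceNorm (c • X) = ‖c‖ * traceNorm X := by
  simp [traceNorm_eq_re_trace_abs, trace_smul]

lemma Matrix.IsHermitian.trace_cfc {A : Matrix n n ℂ} (hA : A.IsHermitian) (f : ℝ → ℝ) :
    (cfc f A).trace = ∑ i, (f (hA.eigenvalues i) : ℂ) := by
  rw [hA.cfc_eq, IsHermitian.cfc, Unitary.conjStarAlgAut_apply, trace_mul_cycle,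
    Unitary.coe_star_mul_self, Matrix.one_mul, trace_diagonal]
  rfl

lemma Matrix.IsHermitian.traceNorm_eq_sum_abs_eigenvalues {X : Matrix n n ℂ}
    (hX : X.IsHermitian) : traceNorm X = ∑ i, |hX.eigenvalues i| := by
  rw [traceNorm_eq_re_trace_abs, CFC.abs_eq_cfc_norm X hX.isSelfAdjoint, hX.trace_cfc,
    Complex.re_sum]
  simp

lemma Matrix.trace_eq_sum_star_dotProduct_mulVec {ι : Type} [Fintype ι] (P : Matrix n n ℂ)
    (b : OrthonormalBasis ι ℂ (EuclideanSpace ℂ n)) :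
    P.trace = ∑ i, star ⇑(b i) ⬝ᵥ P *ᵥ ⇑(b i) := by
  have h : LinearMap.trace ℂ _ (Matrix.toEuclideanLin P) = P.trace := by
    rw [← P.trace_toLin_eq (EuclideanSpace.basisFun n ℂ).toBasis]
    congr 1
  rw [← h, LinearMap.trace_eq_sum_inner _ b]
  simp [EuclideanSpace.inner_eq_star_dotProduct, dotProduct_comm]

lemma traceNorm_sub_le_of_posSemidef {P Q : Matrix n n ℂ} (hP : P.PosSemidef)
    (hQ : Q.PosSemidef) : traceNorm (P - Q) ≤ P.trace.re + Q.trace.re := by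
  have hY := hP.1.sub hQ.1
  rw [hY.traceNorm_eq_sum_abs_eigenvalues,
    P.trace_eq_sum_star_dotProduct_mulVec hY.eigenvectorBasis,
    Q.trace_eq_sum_star_dotProduct_mulVec hY.eigenvectorBasis,
    Complex.re_sum, Complex.re_sum, ← Finset.sum_add_distrib]
  refine Finset.sum_le_sum fun i _ => ?_
  have hp := hP.re_dotProduct_nonneg (hY.eigenvectorBasis i)
  have hq := hQ.re_dotProduct_nonneg (hY.eigenvectorBasis i)
  rw [hY.eigenvalues_eq, sub_mulVec, dotProduct_sub, map_sub, abs_sub_le_iff]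
  simp only [RCLike.re_to_complex] at hp hq ⊢
  constructor <;> linarith

lemma Matrix.IsHermitian.exists_posSemidef_sub_eq {X : Matrix n n ℂ} (hX : X.IsHermitian) :
    ∃ P Q : Matrix n n ℂ, P.PosSemidef ∧ Q.PosSemidef ∧ X = P - Q ∧
      P.trace.re + Q.trace.re = traceNorm X := by
  refine ⟨X⁺, X⁻, (CFC.posPart_nonneg X).posSemidef, (CFC.negPart_nonneg X).posSemidef,
    (CFC.posPart_sub_negPart X hX.isSelfAdjoint).symm, ?_⟩
  rw [traceNorm_eq_re_trace_abs, ← CFC.posPart_add_negPart X hX.isSelfAdjoint, trace_add,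
    Complex.add_re]

end TraceNorm

section TensorId

variable {R A B : Type}

lemma tensorId_sub (Φ : Matrix A A ℂ →ₗ[ℂ] Matrix B B ℂ) (ρ σ : Matrix (R × A) (R × A) ℂ) :
    tensorId Φ (ρ - σ) = tensorId Φ ρ - tensorId Φ σ := by
  ext p q
  exact congrFun (congrFun (map_sub Φ _ _) p.2) q.2

lemma tensorId_add_left (Φ Ψ : Matrix A A ℂ →ₗ[ℂ] Matrix B B ℂ) (ρ : Matrix (R × A) (R × A) ℂ) :
    tensorId (Φ + Ψ) ρ = tensorId Φ ρ + tensorId Ψ ρ := by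
  ext p q
  simp [tensorId]

lemma tensorId_smul_left (c : ℂ) (Φ : Matrix A A ℂ →ₗ[ℂ] Matrix B B ℂ)
    (ρ : Matrix (R × A) (R × A) ℂ) : tensorId (c • Φ) ρ = c • tensorId Φ ρ := by
  ext p q
  simp [tensorId]

lemma tensorId_replacer [Fintype A] (τ : Matrix B B ℂ) (ρ : Matrix (R × A) (R × A) ℂ) :
    tensorId (replacer A τ) ρ = traceOutSnd ρ ⊗ₖ τ := by
  ext p q
  simp [tensorId, replacer, traceOutSnd, trace]

variable [Fintype R] [Fintype A] [Fintype B] {M : Matrix A A ℂ →ₗ[ℂ] Matrix B B ℂ}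

lemma IsCPTP.posSemidef_tensorId (hM : IsCPTP M) {ρ : Matrix (R × A) (R × A) ℂ}
    (hρ : ρ.PosSemidef) : (tensorId M ρ).PosSemidef := by
  let e := Fintype.equivFin R
  have h := hM.1 _ _ (hρ.submatrix (Prod.map e.symm id))
  convert h.submatrix (Prod.map e id)
  ext p q
  simp [tensorId]

lemma IsCPTP.trace_tensorId (hM : IsCPTP M) (ρ : Matrix (R × A) (R × A) ℂ) :
    (tensorId M ρ).trace = ρ.trace := by
  simp only [trace, diag, Fintype.sum_prod_type]
  refine Finset.sum_congr rfl fun r _ => ?_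
  simpa [trace, tensorId] using hM.2 (of fun a a' => ρ (r, a) (r, a'))

lemma IsCPTP.traceNorm_tensorId_le [DecidableEq R] [DecidableEq A] [DecidableEq B]
    (hM : IsCPTP M) {X : Matrix (R × A) (R × A) ℂ} (hX : X.IsHermitian) :
    traceNorm (tensorId M X) ≤ traceNorm X := by
  obtain ⟨P, Q, hP, hQ, rfl, htr⟩ := hX.exists_posSemidef_sub_eq
  rw [tensorId_sub, ← htr, ← hM.trace_tensorId P, ← hM.trace_tensorId Q]
  exact traceNorm_sub_le_of_posSemidef (hM.posSemidef_tensorId hP) (hM.posSemidef_tensorId hQ)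

end TensorId

theorem stmt7_general {R A B : Type} [Fintype R] [DecidableEq R] [Fintype A] [DecidableEq A]
    [Fintype B] [DecidableEq B]
    (N M : Matrix A A ℂ →ₗ[ℂ] Matrix B B ℂ) (τ : Matrix B B ℂ) (lam : ℝ)
    (hlam : lam ∈ Set.Icc (0:ℝ) 1)
    (hM : IsCPTP M)
    (hN : N = (lam : ℂ) • replacer A τ + ((1 - lam : ℝ) : ℂ) • M)
    (ρ σ : Matrix (R × A) (R × A) ℂ) (hρ : ρ.PosSemidef) (hσ : σ.PosSemidef)
    (hmarg : traceOutSnd ρ = traceOutSnd σ) :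
    traceNorm (tensorId N ρ - tensorId N σ) ≤ (1 - lam) * traceNorm (ρ - σ) := by
  have hdiff : tensorId N ρ - tensorId N σ = ((1 - lam : ℝ) : ℂ) • tensorId M (ρ - σ) := by
    simp only [hN, tensorId_add_left, tensorId_smul_left, tensorId_replacer, hmarg, tensorId_sub]
    module
  have hlam' : 0 ≤ 1 - lam := sub_nonneg.2 hlam.2
  rw [hdiff, traceNorm_smul, Complex.norm_real, Real.norm_of_nonneg hlam']
  exact mul_le_mul_of_nonneg_left (hM.traceNorm_tensorId_le (hρ.1.sub hσ.1)) hlam'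

/-- If `N = λ R_τ + (1−λ) M` with `λ ∈ [0,1]`, `τ` trace-one Hermitian, and `M` CPTP,
then for all states `ρ_{RA}, σ_{RA}` with equal marginals `ρ_R = σ_R`,
`‖(id_R ⊗ N)(ρ) − (id_R ⊗ N)(σ)‖₁ ≤ (1−λ)‖ρ − σ‖₁`. -/
theorem stmt7 {R A B : Type} [Fintype R] [DecidableEq R] [Fintype A] [DecidableEq A]
    [Fintype B] [DecidableEq B]
    (N M : Matrix A A ℂ →ₗ[ℂ] Matrix B B ℂ) (τ : Matrix B B ℂ) (lam : ℝ)
    (hlam : lam ∈ Set.Icc (0:ℝ) 1) (hτH : τ.IsHermitian) (hτtr : τ.trace = 1)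
    (hM : IsCPTP M)
    (hN : N = (lam : ℂ) • replacer A τ + ((1 - lam : ℝ) : ℂ) • M)
    (ρ σ : Matrix (R × A) (R × A) ℂ) (hρ : ρ.PosSemidef) (hσ : σ.PosSemidef)
    (hρtr : ρ.trace = 1) (hσtr : σ.trace = 1)
    (hmarg : traceOutSnd ρ = traceOutSnd σ) :
    traceNorm (tensorId N ρ - tensorId N σ) ≤ (1 - lam) * traceNorm (ρ - σ) :=
  stmt7_general N M τ lam hlam hM hN ρ σ hρ hσ hmarg
end

section
/- For a measurement channel M(ρ) = Σ_y Tr(Λ_y ρ)|y⟩⟨y| with POVM (Λ_y), the quantum Doeblin coefficient equals the sum of the minimal eigenvalues of the POVM elements: α(M) = Σ_y λ_min(Λ_y). -/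
/-!
The Choi matrix `Γ = Σ_y Λ_yᵀ ⊗ |y⟩⟨y|` is block diagonal with blocks `Λ_yᵀ`. Compressing
`Γ - I ⊗ X ≥ 0` to the `y`-th block gives `Λ_yᵀ ≥ X_yy · I`, i.e. `X_yy ≤ λ_min(Λ_y)`, and summing
over `y` bounds `Tr X`. Conversely `X = diag(λ_min(Λ_y))` makes every block of `Γ - I ⊗ X`
positive semidefinite, so the bound is attained.
-/
open Matrix
open scoped Kronecker ComplexOrder

namespace Matrix

section Eigenvalues
variable {n 𝕜 : Type*} [Fintype n] [DecidableEq n] [RCLike 𝕜] {A : Matrix n n 𝕜}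

theorem IsHermitian.posSemidef_sub_smul_one_iff (hA : A.IsHermitian) (c : ℝ) :
    (A - (c : 𝕜) • 1).PosSemidef ↔ ∀ i, c ≤ hA.eigenvalues i := by
  have hdiag : A - (c : 𝕜) • 1 = Unitary.conjStarAlgAut 𝕜 _ hA.eigenvectorUnitary
      (diagonal fun i => ((hA.eigenvalues i - c : ℝ) : 𝕜)) := by
    conv_lhs => rw [hA.spectral_theorem]
    rw [← map_one (Unitary.conjStarAlgAut 𝕜 _ hA.eigenvectorUnitary), ← map_smul, ← map_sub,
      smul_one_eq_diagonal, diagonal_sub]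
    simp
  rw [hdiag, Unitary.conjStarAlgAut_apply, Unitary.isUnit_coe.posSemidef_star_right_conjugate_iff,
    posSemidef_diagonal_iff]
  simp

theorem IsHermitian.posSemidef_sub_smul_one_iff_le_iInf [Nonempty n] (hA : A.IsHermitian)
    (c : ℝ) : (A - (c : 𝕜) • 1).PosSemidef ↔ c ≤ ⨅ i, hA.eigenvalues i := by
  rw [hA.posSemidef_sub_smul_one_iff, le_ciInf_iff (Set.finite_range _).bddBelow]

end Eigenvalues

section BlockDiagonal
variable {l m o α : Type*}

theorem sum_kronecker_single_eq_blockDiagonal [Fintype o] [DecidableEq o] [Semiring α]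
    (M : o → Matrix l m α) : ∑ k, M k ⊗ₖ single k k (1 : α) = blockDiagonal M := by
  ext ⟨i, k⟩ ⟨j, k'⟩
  simp [kroneckerMap_apply, single_apply, Matrix.sum_apply, blockDiagonal_apply', ite_and]

theorem one_kronecker_diagonal [DecidableEq l] [DecidableEq o] [CommSemiring α] (c : o → α) :
    (1 : Matrix l l α) ⊗ₖ diagonal c = blockDiagonal fun k => c k • 1 := by
  simp [kronecker_diagonal, op_smul_eq_smul]

theorem submatrix_blockDiagonal_prodMk [DecidableEq o] [Zero α] (M : o → Matrix l m α) (k : o) :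
    (blockDiagonal M).submatrix (·, k) (·, k) = M k := by
  ext i j
  simp [blockDiagonal_apply_eq]

theorem submatrix_kronecker_prodMk [CommMagma α] (A : Matrix l m α) (B : Matrix o o α) (k k' : o) :
    (A ⊗ₖ B).submatrix (·, k) (·, k') = B k k' • A := by
  ext i j
  simp [kroneckerMap_apply, mul_comm]

theorem posSemidef_blockDiagonal {𝕜 : Type*} [RCLike 𝕜] [Fintype l] [Fintype o] [DecidableEq o]
    {M : o → Matrix l l 𝕜} (hM : ∀ k, (M k).PosSemidef) : (blockDiagonal M).PosSemidef := by
  rw [← sum_kronecker_single_eq_blockDiagonal]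
  refine posSemidef_sum _ fun k _ => (hM k).kronecker ?_
  rw [← diagonal_single]
  exact .diagonal (Pi.single_nonneg.mpr zero_le_one)

end BlockDiagonal
end Matrix

theorem stmt8_general {d : ℕ} (hd : 0 < d) {Y : Type} [Fintype Y] [DecidableEq Y]
    (Λ : Y → Matrix (Fin d) (Fin d) ℂ)
    (hpos : ∀ y, (Λ y).PosSemidef) :
    sSup {t : ℝ | ∃ X : Matrix Y Y ℂ, X.IsHermitian ∧
        ((∑ y, (Λ y)ᵀ ⊗ₖ Matrix.single y y (1 : ℂ))
          - (1 : Matrix (Fin d) (Fin d) ℂ) ⊗ₖ X).PosSemidef ∧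
        t = X.trace.re}
      = ∑ y, ⨅ i, (hpos y).isHermitian.eigenvalues i := by
  have : Nonempty (Fin d) := ⟨⟨0, hd⟩⟩
  have hblock (y : Y) (c : ℝ) :
      ((Λ y)ᵀ - (c : ℂ) • 1).PosSemidef ↔ c ≤ ⨅ i, (hpos y).isHermitian.eigenvalues i := by
    rw [← posSemidef_transpose_iff, transpose_sub, transpose_transpose, transpose_smul,
      transpose_one]
    exact (hpos y).isHermitian.posSemidef_sub_smul_one_iff_le_iInf c
  rw [sum_kronecker_single_eq_blockDiagonal]
  refine IsGreatest.csSup_eq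
    ⟨⟨diagonal fun y => ((⨅ i, (hpos y).isHermitian.eigenvalues i : ℝ) : ℂ), ?_, ?_, ?_⟩, ?_⟩
  · exact isHermitian_diagonal_of_self_adjoint _ (by ext; simp)
  · rw [one_kronecker_diagonal, ← blockDiagonal_sub]
    exact posSemidef_blockDiagonal fun y => (hblock y _).mpr le_rfl
  · simp [trace_diagonal]
  · rintro _ ⟨X, hX, hPSD, rfl⟩
    rw [trace, Complex.re_sum]
    gcongr with y
    have hy := hPSD.submatrix (·, y)
    rw [submatrix_sub, Pi.sub_apply, Pi.sub_apply, submatrix_blockDiagonal_prodMk,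
      submatrix_kronecker_prodMk, ← hX.coe_re_apply_self y] at hy
    exact (hblock y _).mp hy

/-- For the measurement channel with POVM `(Λ_y)`, whose Choi matrix is
`Γ = Σ_y Λ_yᵀ ⊗ |y⟩⟨y|`, the quantum Doeblin coefficient
`α(M) = sup { Tr X : X Hermitian, I ⊗ X ≤ Γ }` equals `Σ_y λ_min(Λ_y)`. -/
theorem stmt8 {d : ℕ} (hd : 0 < d) {Y : Type} [Fintype Y] [DecidableEq Y]
    (Λ : Y → Matrix (Fin d) (Fin d) ℂ)
    (hpos : ∀ y, (Λ y).PosSemidef)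
    (hsum : ∑ y, Λ y = 1) :
    sSup {t : ℝ | ∃ X : Matrix Y Y ℂ, X.IsHermitian ∧
        ((∑ y, (Λ y)ᵀ ⊗ₖ Matrix.single y y (1 : ℂ))
          - (1 : Matrix (Fin d) (Fin d) ℂ) ⊗ₖ X).PosSemidef ∧
        t = X.trace.re}
      = ∑ y, ⨅ i, (hpos y).isHermitian.eigenvalues i :=
  stmt8_general hd Λ hpos
end

section
/- For trace-one Hermitian τ and positive semidefinite σ and any γ ≥ 0, the hockey-stick divergence satisfies E_γ(τ‖σ) + (1−γ)₊ = 1 − sup { Tr Y : Y Hermitian, Y ≤ τ, Y ≤ γσ }. -/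
/-!
Feasible `Y` correspond to `B = τ - Y` with `0 ≤ B` and `A ≤ B`, where `A = τ - γσ`, and
`Tr Y = 1 - Tr B`; so the claim is `Tr A⁺ = min {Tr B : 0 ≤ B, A ≤ B}`. The minimum is attained
at `B = A⁺`. Conversely, if `P` is the spectral projection of `A` onto `(0, ∞)`, then
`Tr A⁺ = Tr PAP ≤ Tr PBP ≤ Tr B`, the last step because `Tr B - Tr PBP = Tr (1-P)B(1-P) ≥ 0`.
-/

open Matrix
open scoped ComplexOrder MatrixOrder

namespace Matrix

variable {n 𝕜 : Type*} [Fintype n] [DecidableEq n] [RCLike 𝕜]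

lemma trace_mul_mul_le_trace_of_isStarProjection {P B : Matrix n n 𝕜} (hP : IsStarProjection P)
    (hB : 0 ≤ B) : (P * B * P).trace ≤ B.trace := by
  have hsplit : B.trace = (P * B * P).trace + ((1 - P) * B * (1 - P)).trace := by
    rw [trace_mul_cycle, hP.isIdempotentElem.eq, trace_mul_cycle,
      hP.one_sub.isIdempotentElem.eq, ← trace_add, ← add_mul, add_sub_cancel, one_mul]
  rw [hsplit]
  exact le_add_of_nonneg_right
    (hP.one_sub.isSelfAdjoint.conjugate_nonneg hB).posSemidef.trace_nonneg

lemma IsHermitian.trace_cfc_s10 {A : Matrix n n 𝕜} (hA : A.IsHermitian) (f : ℝ → ℝ) :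
    (cfc f A).trace = ∑ i, (f (hA.eigenvalues i) : 𝕜) := by
  rw [hA.cfc_eq, IsHermitian.cfc, Unitary.conjStarAlgAut_apply, trace_mul_cycle,
    Unitary.coe_star_mul_self, one_mul, trace_diagonal]
  rfl

lemma IsHermitian.trace_posPart {A : Matrix n n 𝕜} (hA : A.IsHermitian) :
    A⁺.trace = ∑ i, (((hA.eigenvalues i)⁺ : ℝ) : 𝕜) := by
  rw [CFC.posPart_def, cfcₙ_eq_cfc, hA.trace_cfc_s10]

lemma exists_isStarProjection_mul_mul_eq_posPart {A : Matrix n n 𝕜} (hA : IsSelfAdjoint A) :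
    ∃ P : Matrix n n 𝕜, IsStarProjection P ∧ P * A * P = A⁺ := by
  -- the spectrum is finite, so `cfc` also applies to the discontinuous indicator of `(0, ∞)`
  have hcont (f : ℝ → ℝ) : ContinuousOn f (spectrum ℝ A) := A.finite_real_spectrum.continuousOn f
  let χ : ℝ → ℝ := (Set.Ioi 0).indicator 1
  refine ⟨cfc χ A, ⟨?_, cfc_predicate χ A⟩, ?_⟩
  · rw [IsIdempotentElem, ← cfc_mul χ χ A (hcont _) (hcont _)]
    refine cfc_congr fun x _ => ?_
    by_cases hx : 0 < x <;> simp [χ, hx]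
  · nth_rewrite 2 [← cfc_id ℝ A]
    rw [← cfc_mul χ id A (hcont _) (hcont _), ← cfc_mul _ χ A (hcont _) (hcont _),
      CFC.posPart_def, cfcₙ_eq_cfc]
    refine cfc_congr fun x _ => ?_
    by_cases hx : 0 < x
    · simp [χ, hx, hx.le]
    · simp [χ, hx, posPart_eq_zero.mpr (not_lt.mp hx)]

lemma trace_posPart_le {A B : Matrix n n 𝕜} (hB : 0 ≤ B) (hAB : A ≤ B) :
    A⁺.trace ≤ B.trace := by
  have hA : IsSelfAdjoint A := by
    simpa using (IsSelfAdjoint.of_nonneg hB).sub (IsSelfAdjoint.of_nonneg (sub_nonneg.mpr hAB))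
  obtain ⟨P, hP, hPAP⟩ := exists_isStarProjection_mul_mul_eq_posPart hA
  calc A⁺.trace = (P * A * P).trace := by rw [hPAP]
    _ ≤ (P * B * P).trace := OrderHomClass.mono (tracePositiveLinearMap n ℝ 𝕜)
      (hP.isSelfAdjoint.conjugate_le_conjugate hAB)
    _ ≤ B.trace := trace_mul_mul_le_trace_of_isStarProjection hP hB

end Matrix

theorem stmt10_general {n : Type} [Fintype n] [DecidableEq n]
    (τ σ : Matrix n n ℂ) (γ : ℝ)
    (hτ : τ.IsHermitian) (hτtr : τ.trace = 1)
    (hdiff : (τ - (γ : ℂ) • σ).IsHermitian) :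
    ((∑ i, max (hdiff.eigenvalues i) 0) - max (1 - γ) 0) + max (1 - γ) 0
      = 1 - sSup {t : ℝ | ∃ Yop : Matrix n n ℂ, Yop.IsHermitian ∧
          (τ - Yop).PosSemidef ∧ ((γ : ℂ) • σ - Yop).PosSemidef ∧ t = Yop.trace.re} := by
  set A := τ - (γ : ℂ) • σ
  have htrA : A⁺.trace = ((∑ i, max (hdiff.eigenvalues i) 0 : ℝ) : ℂ) := by
    rw [hdiff.trace_posPart]
    push_cast
    rfl
  rw [sub_add_cancel]
  suffices IsGreatest _ (1 - ∑ i, max (hdiff.eigenvalues i) 0) by rw [this.csSup_eq]; ring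
  refine ⟨⟨τ - A⁺, hτ.sub (CFC.posPart_nonneg A).posSemidef.isHermitian, ?_, ?_, ?_⟩, ?_⟩
  · rw [sub_sub_cancel]
    exact (CFC.posPart_nonneg A).posSemidef
  · rw [show (γ : ℂ) • σ - (τ - A⁺) = A⁺ - A by simp only [A]; abel]
    exact CFC.le_posPart hdiff.isSelfAdjoint
  · simp [trace_sub, hτtr, htrA]
  · rintro t ⟨Y, -, hYτ, hYσ, rfl⟩
    have hAY : A ≤ τ - Y := by
      rwa [le_iff, show τ - Y - A = (γ : ℂ) • σ - Y by simp only [A]; abel]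
    have hle := (Complex.le_def.mp (trace_posPart_le hYτ.nonneg hAY)).1
    simp only [htrA, trace_sub, hτtr, Complex.ofReal_re, Complex.sub_re, Complex.one_re] at hle
    linarith

/-- Variational formula for the hockey-stick divergence:
`E_γ(τ‖σ) + (1−γ)₊ = 1 − sup { Tr Y : Y Hermitian, Y ≤ τ, Y ≤ γσ }`, where
`E_γ(τ‖σ) = Tr[(τ − γσ)₊] − (1−γ)₊` and `Tr[(A)₊]` is the sum of `max(eigenvalue, 0)`. -/
theorem stmt10 {n : Type} [Fintype n] [DecidableEq n]
    (τ σ : Matrix n n ℂ) (γ : ℝ) (hγ : 0 ≤ γ)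
    (hτ : τ.IsHermitian) (hτtr : τ.trace = 1) (hσ : σ.PosSemidef)
    (hdiff : (τ - (γ : ℂ) • σ).IsHermitian) :
    ((∑ i, max (hdiff.eigenvalues i) 0) - max (1 - γ) 0) + max (1 - γ) 0
      = 1 - sSup {t : ℝ | ∃ Yop : Matrix n n ℂ, Yop.IsHermitian ∧
          (τ - Yop).PosSemidef ∧ ((γ : ℂ) • σ - Yop).PosSemidef ∧ t = Yop.trace.re} :=
  stmt10_general τ σ γ hτ hτtr hdiff
end

section
/- Submultiplicativity of the Doeblin coefficient: for quantum channels N and M, α(N ⊗ M) ≤ α(N)·α(M), where the Choi matrix of N ⊗ M is Γ^N ⊗ Γ^M (up to a permutation of tensor factors). -/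
/-! Tensoring dual-feasible operators `Y₁`, `Y₂` of the two channels gives a dual-feasible
operator for the product channel, with objective value `Tr(Y₁Γ₁) · Tr(Y₂Γ₂)`. All objective
values are nonnegative, so taking infima over `Y₁` and `Y₂` yields `α(N ⊗ M) ≤ α(N) α(M)`. -/

open Matrix
open scoped Kronecker ComplexOrder

/-- Partial trace over the first tensor factor. -/
noncomputable def traceOutFst {A B : Type} [Fintype A] (M : Matrix (A × B) (A × B) ℂ) :
    Matrix B B ℂ :=
  Matrix.of fun i j => ∑ a, M (a, i) (a, j)

/-- The quantum Doeblin coefficient via the dual SDP: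
`α(N) = inf { Tr(Y Γ^N) : Y ≥ 0, Tr_A Y = I_B }`. -/
noncomputable def doeblinDual {dA dB : Type} [Fintype dA] [Fintype dB] [DecidableEq dB]
    (Γ : Matrix (dA × dB) (dA × dB) ℂ) : ℝ :=
  sInf {t : ℝ | ∃ Y : Matrix (dA × dB) (dA × dB) ℂ, Y.PosSemidef ∧
      traceOutFst Y = 1 ∧ t = ((Y * Γ).trace).re}

namespace Matrix

open scoped MatrixOrder in
lemma PosSemidef.trace_mul_nonneg {n 𝕜 : Type*} [Fintype n] [RCLike 𝕜] {A B : Matrix n n 𝕜}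
    (hA : A.PosSemidef) (hB : B.PosSemidef) : 0 ≤ (A * B).trace := by
  classical
  obtain ⟨C, rfl⟩ := CStarAlgebra.nonneg_iff_eq_star_mul_self.mp hB.nonneg
  rw [star_eq_conjTranspose, ← Matrix.mul_assoc, trace_mul_cycle]
  exact (hA.mul_mul_conjTranspose_same C).trace_nonneg

lemma trace_reindex {m n R : Type*} [Fintype m] [Fintype n] [AddCommMonoid R] (e : m ≃ n)
    (A : Matrix m m R) : (reindex e e A).trace = A.trace :=
  e.symm.sum_comp fun i => A i i

end Matrix

lemma Real.le_sInf_mul_sInf {x : ℝ} {s t : Set ℝ} (hs : s.Nonempty) (ht : t.Nonempty)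
    (hs₀ : ∀ a ∈ s, 0 ≤ a) (ht₀ : ∀ b ∈ t, 0 ≤ b) (h : ∀ a ∈ s, ∀ b ∈ t, x ≤ a * b) :
    x ≤ sInf s * sInf t := by
  have hx : ∀ a ∈ s, x ≤ sInf t * a := fun a ha => by
    rw [mul_comm, ← smul_eq_mul, ← Real.sInf_smul_of_nonneg (hs₀ a ha)]
    exact le_csInf ht.smul_set (by rintro _ ⟨b, hb, rfl⟩; exact h a ha b hb)
  rw [mul_comm, ← smul_eq_mul, ← Real.sInf_smul_of_nonneg (Real.sInf_nonneg ht₀)]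
  exact le_csInf hs.smul_set (by rintro _ ⟨a, ha, rfl⟩; exact hx a ha)

section Doeblin

variable {dA dB : Type} [Fintype dA] [Fintype dB] [DecidableEq dB]

def doeblinValues (Γ : Matrix (dA × dB) (dA × dB) ℂ) : Set ℝ :=
  {t : ℝ | ∃ Y : Matrix (dA × dB) (dA × dB) ℂ, Y.PosSemidef ∧
      traceOutFst Y = 1 ∧ t = ((Y * Γ).trace).re}

lemma nonneg_of_mem_doeblinValues {Γ : Matrix (dA × dB) (dA × dB) ℂ} (hΓ : Γ.PosSemidef)
    {t : ℝ} (ht : t ∈ doeblinValues Γ) : 0 ≤ t := by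
  obtain ⟨Y, hY, -, rfl⟩ := ht
  exact (Complex.le_def.mp (hY.trace_mul_nonneg hΓ)).1

lemma doeblinValues_nonempty [Nonempty dA] (Γ : Matrix (dA × dB) (dA × dB) ℂ) :
    (doeblinValues Γ).Nonempty := by
  classical
  have hcard : (Fintype.card dA : ℂ) ≠ 0 := Nat.cast_ne_zero.mpr Fintype.card_ne_zero
  refine ⟨_, (Fintype.card dA : ℂ)⁻¹ • 1, PosSemidef.one.smul (by positivity), ?_, rfl⟩
  ext i j
  simp [traceOutFst, one_apply, hcard]

lemma doeblinDual_le {Γ : Matrix (dA × dB) (dA × dB) ℂ} (hΓ : Γ.PosSemidef) {t : ℝ}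
    (ht : t ∈ doeblinValues Γ) : doeblinDual Γ ≤ t :=
  csInf_le ⟨0, fun _ => nonneg_of_mem_doeblinValues hΓ⟩ ht

end Doeblin

section Kronecker

variable {A₁ B₁ A₂ B₂ : Type} [Fintype A₁] [Fintype A₂]

lemma traceOutFst_reindex_kronecker (Y₁ : Matrix (A₁ × B₁) (A₁ × B₁) ℂ)
    (Y₂ : Matrix (A₂ × B₂) (A₂ × B₂) ℂ) :
    traceOutFst (reindex (Equiv.prodProdProdComm A₁ B₁ A₂ B₂)
      (Equiv.prodProdProdComm A₁ B₁ A₂ B₂) (Y₁ ⊗ₖ Y₂)) = traceOutFst Y₁ ⊗ₖ traceOutFst Y₂ := by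
  ext ⟨b₁, b₂⟩ ⟨b₁', b₂'⟩
  simp only [traceOutFst, of_apply, reindex_apply, submatrix_apply, kroneckerMap_apply,
    Equiv.prodProdProdComm_symm, Equiv.prodProdProdComm_apply, Fintype.sum_prod_type,
    Finset.sum_mul_sum]

lemma trace_reindex_kronecker_mul [Fintype B₁] [Fintype B₂]
    (Y₁ Γ₁ : Matrix (A₁ × B₁) (A₁ × B₁) ℂ) (Y₂ Γ₂ : Matrix (A₂ × B₂) (A₂ × B₂) ℂ) :
    (reindex (Equiv.prodProdProdComm A₁ B₁ A₂ B₂) (Equiv.prodProdProdComm A₁ B₁ A₂ B₂) (Y₁ ⊗ₖ Y₂) *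
      reindex (Equiv.prodProdProdComm A₁ B₁ A₂ B₂) (Equiv.prodProdProdComm A₁ B₁ A₂ B₂)
        (Γ₁ ⊗ₖ Γ₂)).trace = (Y₁ * Γ₁).trace * (Y₂ * Γ₂).trace := by
  rw [reindex_apply, reindex_apply, submatrix_mul_equiv, ← reindex_apply, trace_reindex,
    ← mul_kronecker_mul, trace_kronecker]

lemma mul_mem_doeblinValues_reindex_kronecker [Fintype B₁] [Fintype B₂] [DecidableEq B₁]
    [DecidableEq B₂] {Γ₁ : Matrix (A₁ × B₁) (A₁ × B₁) ℂ} {Γ₂ : Matrix (A₂ × B₂) (A₂ × B₂) ℂ}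
    (h₁ : Γ₁.PosSemidef) {t₁ t₂ : ℝ} (ht₁ : t₁ ∈ doeblinValues Γ₁)
    (ht₂ : t₂ ∈ doeblinValues Γ₂) :
    t₁ * t₂ ∈ doeblinValues (reindex (Equiv.prodProdProdComm A₁ B₁ A₂ B₂)
      (Equiv.prodProdProdComm A₁ B₁ A₂ B₂) (Γ₁ ⊗ₖ Γ₂)) := by
  obtain ⟨Y₁, hY₁, hT₁, rfl⟩ := ht₁
  obtain ⟨Y₂, hY₂, hT₂, rfl⟩ := ht₂
  refine ⟨reindex (Equiv.prodProdProdComm A₁ B₁ A₂ B₂) (Equiv.prodProdProdComm A₁ B₁ A₂ B₂)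
    (Y₁ ⊗ₖ Y₂), (hY₁.kronecker hY₂).submatrix _, ?_, ?_⟩
  · rw [traceOutFst_reindex_kronecker, hT₁, hT₂, one_kronecker_one]
  · -- `Re (z * w) = Re z * Re w` as `z = Tr (Y₁ * Γ₁) ≥ 0` is real
    have him₁ := (Complex.le_def.mp (hY₁.trace_mul_nonneg h₁)).2
    rw [trace_reindex_kronecker_mul, Complex.mul_re, ← him₁, Complex.zero_im, zero_mul, sub_zero]

end Kronecker

theorem stmt13_general {A₁ B₁ A₂ B₂ : Type}
    [Fintype A₁] [Fintype B₁] [Fintype A₂] [Fintype B₂]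
    [DecidableEq B₁] [DecidableEq B₂]
    [Nonempty A₁] [Nonempty A₂]
    (Γ₁ : Matrix (A₁ × B₁) (A₁ × B₁) ℂ) (Γ₂ : Matrix (A₂ × B₂) (A₂ × B₂) ℂ)
    (h₁ : Γ₁.PosSemidef) (h₂ : Γ₂.PosSemidef) :
    doeblinDual
        (Matrix.reindex (Equiv.prodProdProdComm A₁ B₁ A₂ B₂)
          (Equiv.prodProdProdComm A₁ B₁ A₂ B₂) (Γ₁ ⊗ₖ Γ₂))
      ≤ doeblinDual Γ₁ * doeblinDual Γ₂ :=
  Real.le_sInf_mul_sInf (doeblinValues_nonempty Γ₁) (doeblinValues_nonempty Γ₂)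
    (fun _ => nonneg_of_mem_doeblinValues h₁) (fun _ => nonneg_of_mem_doeblinValues h₂)
    fun _ ht₁ _ ht₂ => doeblinDual_le ((h₁.kronecker h₂).submatrix _)
      (mul_mem_doeblinValues_reindex_kronecker h₁ ht₁ ht₂)

/-- Submultiplicativity of the Doeblin coefficient: `α(N ⊗ M) ≤ α(N) α(M)`, where the Choi
matrix of `N ⊗ M` is `Γ^N ⊗ Γ^M` up to the natural permutation of tensor factors. -/
theorem stmt13 {A₁ B₁ A₂ B₂ : Type}
    [Fintype A₁] [Fintype B₁] [Fintype A₂] [Fintype B₂]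
    [DecidableEq A₁] [DecidableEq B₁] [DecidableEq A₂] [DecidableEq B₂]
    [Nonempty A₁] [Nonempty A₂]
    (Γ₁ : Matrix (A₁ × B₁) (A₁ × B₁) ℂ) (Γ₂ : Matrix (A₂ × B₂) (A₂ × B₂) ℂ)
    (h₁ : Γ₁.PosSemidef) (h₂ : Γ₂.PosSemidef)
    (hTP₁ : traceOutSnd Γ₁ = 1) (hTP₂ : traceOutSnd Γ₂ = 1) :
    doeblinDual
        (Matrix.reindex (Equiv.prodProdProdComm A₁ B₁ A₂ B₂)
          (Equiv.prodProdProdComm A₁ B₁ A₂ B₂) (Γ₁ ⊗ₖ Γ₂))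
      ≤ doeblinDual Γ₁ * doeblinDual Γ₂ :=
  stmt13_general Γ₁ Γ₂ h₁ h₂
end

section
/- If X₁, X₂ ≥ 0 are positive semidefinite with I ⊗ X₁ ≤ Γ₁ and I ⊗ X₂ ≤ Γ₂ (where Γ₁, Γ₂ are positive semidefinite Choi matrices of channels), then (I ⊗ I) ⊗ (X₁ ⊗ X₂) ≤ Γ₁ ⊗ Γ₂ (after the natural reordering of tensor factors). Consequently, if α(N₁) and α(N₂) are each attained by positive semidefinite optimizers, then α(N₁ ⊗ N₂) = α(N₁)·α(N₂). -/
/-!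
Part (i) is the splitting
`Γ₁ ⊗ Γ₂ - (I ⊗ X₁) ⊗ (I ⊗ X₂) = (Γ₁ - I ⊗ X₁) ⊗ Γ₂ + (I ⊗ X₁) ⊗ (Γ₂ - I ⊗ X₂)`
into two positive semidefinite terms. It makes `X₁ ⊗ X₂` feasible for `Γ₁ ⊗ Γ₂`, so optimizers
give `α(N₁) α(N₂) ≤ α(N₁ ⊗ N₂)`.

Conversely, let `X` be feasible for `Γ₁ ⊗ Γ₂` and `u` a vector on `A₁ × B₁`. Compressing the
constraint `I ⊗ X ≤ Γ₁ ⊗ Γ₂` by `u ⊗ I` yields `I ⊗ Y_u ≤ ⟨u, Γ₁ u⟩ Γ₂`, where `Y_u` is the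
compression of `I_{A₁} ⊗ X` by `u ⊗ I`; hence `tr Y_u ≤ ⟨u, Γ₁ u⟩ α(N₂)`. Since
`tr Y_u = ⟨u, (I ⊗ Tr_{B₂} X) u⟩`, this holding for all `u` says `I ⊗ Tr_{B₂} X ≤ α(N₂) Γ₁`,
so `tr X = tr (Tr_{B₂} X) ≤ α(N₂) α(N₁)`.
-/

open Matrix
open scoped Kronecker ComplexOrder

/-- The quantum Doeblin coefficient, defined via the Choi-matrix SDP. -/
noncomputable def doeblin {dA dB : Type} [Fintype dA] [Fintype dB] [DecidableEq dA]
    (Γ : Matrix (dA × dB) (dA × dB) ℂ) : ℝ :=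
  sSup {t : ℝ | ∃ X : Matrix dB dB ℂ, X.IsHermitian ∧
      (Γ - (1 : Matrix dA dA ℂ) ⊗ₖ X).PosSemidef ∧ t = X.trace.re}

namespace Matrix

section Kronecker

variable {𝕜 m n : Type*} [RCLike 𝕜]

theorem IsHermitian.kronecker {A : Matrix m m 𝕜} {B : Matrix n n 𝕜} (hA : A.IsHermitian)
    (hB : B.IsHermitian) : (A ⊗ₖ B).IsHermitian := by
  rw [IsHermitian, conjTranspose_kronecker, hA.eq, hB.eq]

theorem PosSemidef.kronecker_sub_kronecker [Finite m] [Finite n] {P₁ Q₁ : Matrix m m 𝕜}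
    {P₂ Q₂ : Matrix n n 𝕜} (hP₁ : P₁.PosSemidef) (hQ₂ : Q₂.PosSemidef)
    (h₁ : (Q₁ - P₁).PosSemidef) (h₂ : (Q₂ - P₂).PosSemidef) :
    (Q₁ ⊗ₖ Q₂ - P₁ ⊗ₖ P₂).PosSemidef := by
  have hsplit : Q₁ ⊗ₖ Q₂ - P₁ ⊗ₖ P₂ = (Q₁ - P₁) ⊗ₖ Q₂ + P₁ ⊗ₖ (Q₂ - P₂) := by
    ext
    simp only [sub_apply, add_apply, kroneckerMap_apply]
    ring
  rw [hsplit]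
  exact (h₁.kronecker hQ₂).add (hP₁.kronecker h₂)

theorem IsHermitian.posSemidef_of_re_dotProduct_mulVec_nonneg [Fintype n] {A : Matrix n n 𝕜}
    (hA : A.IsHermitian) (h : ∀ x, 0 ≤ RCLike.re (star x ⬝ᵥ A *ᵥ x)) : A.PosSemidef :=
  .of_dotProduct_mulVec_nonneg hA fun x =>
    RCLike.nonneg_iff.mpr ⟨h x, hA.im_star_dotProduct_mulVec_self x⟩

end Kronecker

theorem reindex_prodProdProdComm_kronecker_kronecker {R l l' m m' n n' p p' : Type*}
    [CommSemigroup R] (A : Matrix l l' R) (B : Matrix m m' R) (C : Matrix n n' R)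
    (D : Matrix p p' R) :
    reindex (Equiv.prodProdProdComm l m n p) (Equiv.prodProdProdComm l' m' n' p')
      ((A ⊗ₖ B) ⊗ₖ (C ⊗ₖ D)) = (A ⊗ₖ C) ⊗ₖ (B ⊗ₖ D) := by
  ext
  simp [mul_mul_mul_comm]

section Contraction

variable {𝕜 : Type*} [RCLike 𝕜] {ι κ : Type} [Fintype ι]

def contractFst (u : ι → 𝕜) (M : Matrix (ι × κ) (ι × κ) 𝕜) : Matrix κ κ 𝕜 :=
  of fun k k' => ∑ i, ∑ i', star (u i) * M (i, k) (i', k') * u i'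

def vecKroneckerOne [DecidableEq κ] (u : ι → 𝕜) : Matrix (ι × κ) κ 𝕜 :=
  of fun p k => u p.1 * (1 : Matrix κ κ 𝕜) p.2 k

theorem contractFst_eq_conjTranspose_mul_mul [Fintype κ] [DecidableEq κ] (u : ι → 𝕜)
    (M : Matrix (ι × κ) (ι × κ) 𝕜) :
    -- without `κ :=`, the product elaborates through `CStarMatrix` and `mul_apply` does not fire
    contractFst u M = (vecKroneckerOne (κ := κ) u)ᴴ * M * vecKroneckerOne (κ := κ) u := by
  ext k k'
  simp only [contractFst, vecKroneckerOne, of_apply, mul_apply, conjTranspose_apply,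
    Fintype.sum_prod_type, Finset.sum_mul, one_apply, apply_ite star, star_zero, mul_ite, ite_mul,
    mul_one, mul_zero, zero_mul, Finset.sum_ite_eq', Finset.mem_univ, if_true]
  exact Finset.sum_comm

theorem IsHermitian.contractFst [Fintype κ] {M : Matrix (ι × κ) (ι × κ) 𝕜} (hM : M.IsHermitian)
    (u : ι → 𝕜) : (contractFst u M).IsHermitian := by
  classical
  rw [contractFst_eq_conjTranspose_mul_mul]
  exact isHermitian_conjTranspose_mul_mul _ hM

theorem PosSemidef.contractFst [Fintype κ] {M : Matrix (ι × κ) (ι × κ) 𝕜} (hM : M.PosSemidef)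
    (u : ι → 𝕜) : (contractFst u M).PosSemidef := by
  classical
  rw [contractFst_eq_conjTranspose_mul_mul]
  exact hM.conjTranspose_mul_mul_same _

theorem contractFst_sub (u : ι → 𝕜) (M N : Matrix (ι × κ) (ι × κ) 𝕜) :
    contractFst u (M - N) = contractFst u M - contractFst u N := by
  ext
  simp [contractFst, mul_sub, sub_mul]

theorem contractFst_kronecker (u : ι → 𝕜) (P : Matrix ι ι 𝕜) (Q : Matrix κ κ 𝕜) :
    contractFst u (P ⊗ₖ Q) = (star u ⬝ᵥ P *ᵥ u) • Q := by
  ext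
  simp only [contractFst, of_apply, kroneckerMap_apply, smul_apply, smul_eq_mul, dotProduct,
    mulVec, Pi.star_apply, Finset.sum_mul, Finset.mul_sum]
  exact Finset.sum_congr rfl fun _ _ => Finset.sum_congr rfl fun _ _ => by ring

theorem trace_contractFst [Fintype κ] (u : ι → ℂ) (M : Matrix (ι × κ) (ι × κ) ℂ) :
    (contractFst u M).trace = star u ⬝ᵥ traceOutSnd M *ᵥ u := by
  simp only [contractFst, trace, diag, traceOutSnd, of_apply, dotProduct, mulVec, Pi.star_apply,
    Finset.sum_mul, Finset.mul_sum]
  rw [Finset.sum_comm]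
  refine Finset.sum_congr rfl fun _ _ => ?_
  rw [Finset.sum_comm]
  exact Finset.sum_congr rfl fun _ _ => Finset.sum_congr rfl fun _ _ => by ring

end Contraction

variable {A B : Type} [Fintype B]

theorem IsHermitian.traceOutSnd {M : Matrix (A × B) (A × B) ℂ} (hM : M.IsHermitian) :
    (traceOutSnd M).IsHermitian := by
  ext i j
  simp only [conjTranspose_apply, _root_.traceOutSnd, of_apply, star_sum]
  exact Finset.sum_congr rfl fun b _ => hM.apply (i, b) (j, b)

theorem trace_traceOutSnd [Fintype A] (M : Matrix (A × B) (A × B) ℂ) :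
    (traceOutSnd M).trace = M.trace := by
  simp [_root_.traceOutSnd, trace, Fintype.sum_prod_type]

end Matrix

section Doeblin

variable {dA dB : Type} [Fintype dA] [Fintype dB] [DecidableEq dA]
  {Γ : Matrix (dA × dB) (dA × dB) ℂ}

theorem card_mul_re_trace_le {X : Matrix dB dB ℂ} (h : (Γ - 1 ⊗ₖ X).PosSemidef) :
    Fintype.card dA * X.trace.re ≤ Γ.trace.re := by
  simpa [trace_sub, trace_kronecker, trace_one] using Complex.re_le_re h.trace_nonneg

theorem bddAbove_doeblin_set [Nonempty dA] :
    BddAbove {t : ℝ | ∃ X : Matrix dB dB ℂ, X.IsHermitian ∧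
      (Γ - (1 : Matrix dA dA ℂ) ⊗ₖ X).PosSemidef ∧ t = X.trace.re} := by
  refine ⟨Γ.trace.re / Fintype.card dA, ?_⟩
  rintro _ ⟨X, -, hX, rfl⟩
  rw [le_div_iff₀' (by exact_mod_cast Fintype.card_pos)]
  exact card_mul_re_trace_le hX

theorem re_trace_le_doeblin [Nonempty dA] {X : Matrix dB dB ℂ} (hX : X.IsHermitian)
    (h : (Γ - 1 ⊗ₖ X).PosSemidef) : X.trace.re ≤ doeblin Γ :=
  le_csSup bddAbove_doeblin_set ⟨X, hX, h, rfl⟩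

theorem doeblin_le {t : ℝ} (hΓ : Γ.PosSemidef)
    (h : ∀ X : Matrix dB dB ℂ, X.IsHermitian → (Γ - 1 ⊗ₖ X).PosSemidef → X.trace.re ≤ t) :
    doeblin Γ ≤ t := by
  refine csSup_le ⟨0, 0, isHermitian_zero, by simpa using hΓ, by simp⟩ ?_
  rintro _ ⟨X, hX, hfeas, rfl⟩
  exact h X hX hfeas

theorem doeblin_nonneg [Nonempty dA] (hΓ : Γ.PosSemidef) : 0 ≤ doeblin Γ := by
  simpa using re_trace_le_doeblin (X := 0) isHermitian_zero (by simpa using hΓ)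

theorem re_trace_le_mul_doeblin [Nonempty dA] {c : ℝ} (hc : 0 ≤ c) {Y : Matrix dB dB ℂ}
    (hY : Y.IsHermitian) (h : (c • Γ - 1 ⊗ₖ Y).PosSemidef) : Y.trace.re ≤ c * doeblin Γ := by
  obtain rfl | hc := hc.eq_or_lt
  · have hcard : (0 : ℝ) < Fintype.card dA := by exact_mod_cast Fintype.card_pos
    have hY : Fintype.card dA * Y.trace.re ≤ 0 := by
      simpa using card_mul_re_trace_le h
    nlinarith
  · have hfeas : (Γ - 1 ⊗ₖ (c⁻¹ • Y)).PosSemidef := by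
      have := h.smul (inv_nonneg.mpr hc.le)
      rwa [smul_sub, smul_smul, inv_mul_cancel₀ hc.ne', one_smul, ← kronecker_smul] at this
    have hle := re_trace_le_doeblin (hY.smul (.all _)) hfeas
    rwa [trace_smul, Complex.smul_re, smul_eq_mul, inv_mul_le_iff₀ hc] at hle

end Doeblin

section Tensor

variable {A₁ B₁ A₂ B₂ : Type} [DecidableEq A₁] [DecidableEq A₂]

theorem contractFst_submatrix_prodProdProdComm_one_kronecker [Fintype A₁] [Fintype B₁]
    (u : A₁ × B₁ → ℂ) (X : Matrix (B₁ × B₂) (B₁ × B₂) ℂ) :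
    contractFst u (((1 : Matrix (A₁ × A₂) (A₁ × A₂) ℂ) ⊗ₖ X).submatrix
        (Equiv.prodProdProdComm A₁ B₁ A₂ B₂) (Equiv.prodProdProdComm A₁ B₁ A₂ B₂)) =
      1 ⊗ₖ contractFst u (((1 : Matrix A₁ A₁ ℂ) ⊗ₖ X).submatrix (Equiv.prodAssoc A₁ B₁ B₂)
        (Equiv.prodAssoc A₁ B₁ B₂)) := by
  ext ⟨a, b⟩ ⟨a', b'⟩
  simp [contractFst, one_apply, Finset.mul_sum, ite_and]

variable [Fintype B₂]

theorem traceOutSnd_submatrix_prodAssoc_one_kronecker (X : Matrix (B₁ × B₂) (B₁ × B₂) ℂ) :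
    traceOutSnd (((1 : Matrix A₁ A₁ ℂ) ⊗ₖ X).submatrix (Equiv.prodAssoc A₁ B₁ B₂)
      (Equiv.prodAssoc A₁ B₁ B₂)) = 1 ⊗ₖ traceOutSnd X := by
  ext ⟨a, b⟩ ⟨a', b'⟩
  simp [traceOutSnd, one_apply, Finset.mul_sum]

variable [Fintype A₁] [Fintype B₁] [Fintype A₂]

theorem posSemidef_reindex_kronecker_sub_one_kronecker {Γ₁ : Matrix (A₁ × B₁) (A₁ × B₁) ℂ}
    {Γ₂ : Matrix (A₂ × B₂) (A₂ × B₂) ℂ} (h₂ : Γ₂.PosSemidef) {X₁ : Matrix B₁ B₁ ℂ}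
    {X₂ : Matrix B₂ B₂ ℂ} (hX₁ : X₁.PosSemidef) (hf₁ : (Γ₁ - 1 ⊗ₖ X₁).PosSemidef)
    (hf₂ : (Γ₂ - 1 ⊗ₖ X₂).PosSemidef) :
    (reindex (Equiv.prodProdProdComm A₁ B₁ A₂ B₂) (Equiv.prodProdProdComm A₁ B₁ A₂ B₂)
      (Γ₁ ⊗ₖ Γ₂) - 1 ⊗ₖ (X₁ ⊗ₖ X₂)).PosSemidef := by
  have hloewner := (PosSemidef.one.kronecker hX₁).kronecker_sub_kronecker h₂ hf₁ hf₂
  rw [← one_kronecker_one, ← reindex_prodProdProdComm_kronecker_kronecker]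
  exact hloewner.submatrix _

variable [Nonempty A₂] {Γ₁ : Matrix (A₁ × B₁) (A₁ × B₁) ℂ} {Γ₂ : Matrix (A₂ × B₂) (A₂ × B₂) ℂ}

theorem posSemidef_doeblin_smul_sub_one_kronecker_traceOutSnd (h₁ : Γ₁.PosSemidef)
    {X : Matrix (B₁ × B₂) (B₁ × B₂) ℂ} (hX : X.IsHermitian)
    (h : (Γ₁ ⊗ₖ Γ₂ - ((1 : Matrix (A₁ × A₂) (A₁ × A₂) ℂ) ⊗ₖ X).submatrix
      (Equiv.prodProdProdComm A₁ B₁ A₂ B₂) (Equiv.prodProdProdComm A₁ B₁ A₂ B₂)).PosSemidef) :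
    (doeblin Γ₂ • Γ₁ - 1 ⊗ₖ traceOutSnd X).PosSemidef := by
  set W := ((1 : Matrix A₁ A₁ ℂ) ⊗ₖ X).submatrix (Equiv.prodAssoc A₁ B₁ B₂)
    (Equiv.prodAssoc A₁ B₁ B₂)
  have hW : W.IsHermitian := (isHermitian_one.kronecker hX).submatrix _
  refine ((h₁.1.smul (.all _)).sub (isHermitian_one.kronecker hX.traceOutSnd))
    |>.posSemidef_of_re_dotProduct_mulVec_nonneg fun u => ?_
  set c := (star u ⬝ᵥ Γ₁ *ᵥ u).re
  have hc : star u ⬝ᵥ Γ₁ *ᵥ u = c :=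
    Complex.eq_re_of_ofReal_le (r := 0) (by exact_mod_cast h₁.dotProduct_mulVec_nonneg u)
  have hcompress : (c • Γ₂ - 1 ⊗ₖ contractFst u W).PosSemidef := by
    have := h.contractFst u
    rwa [contractFst_sub, contractFst_kronecker,
      contractFst_submatrix_prodProdProdComm_one_kronecker, hc, Complex.coe_smul] at this
  have hle := re_trace_le_mul_doeblin (c := c) (h₁.re_dotProduct_nonneg u) (hW.contractFst u)
    hcompress
  rw [trace_contractFst, traceOutSnd_submatrix_prodAssoc_one_kronecker] at hle
  simp only [sub_mulVec, dotProduct_sub, smul_mulVec, dotProduct_smul, hc, map_sub,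
    RCLike.re_to_complex, Complex.smul_re, Complex.ofReal_re, smul_eq_mul]
  linarith [mul_comm c (doeblin Γ₂)]

theorem doeblin_reindex_kronecker_le [Nonempty A₁] (h₁ : Γ₁.PosSemidef) (h₂ : Γ₂.PosSemidef) :
    doeblin (reindex (Equiv.prodProdProdComm A₁ B₁ A₂ B₂) (Equiv.prodProdProdComm A₁ B₁ A₂ B₂)
      (Γ₁ ⊗ₖ Γ₂)) ≤ doeblin Γ₁ * doeblin Γ₂ := by
  refine doeblin_le ((h₁.kronecker h₂).submatrix _) fun X hX h => ?_
  -- undoing the reindexing by `prodProdProdComm` is definitional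
  have hpartial := posSemidef_doeblin_smul_sub_one_kronecker_traceOutSnd h₁ hX
    (h.submatrix (Equiv.prodProdProdComm A₁ B₁ A₂ B₂))
  calc X.trace.re = (traceOutSnd X).trace.re := by rw [trace_traceOutSnd]
    _ ≤ doeblin Γ₂ * doeblin Γ₁ :=
      re_trace_le_mul_doeblin (doeblin_nonneg h₂) hX.traceOutSnd hpartial
    _ = doeblin Γ₁ * doeblin Γ₂ := mul_comm _ _

end Tensor

theorem stmt14_general {A₁ B₁ A₂ B₂ : Type}
    [Fintype A₁] [Fintype B₁] [Fintype A₂] [Fintype B₂]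
    [DecidableEq A₁] [DecidableEq A₂]
    [Nonempty A₁] [Nonempty A₂]
    (Γ₁ : Matrix (A₁ × B₁) (A₁ × B₁) ℂ) (Γ₂ : Matrix (A₂ × B₂) (A₂ × B₂) ℂ)
    (h₁ : Γ₁.PosSemidef) (h₂ : Γ₂.PosSemidef) :
    (∀ X₁ : Matrix B₁ B₁ ℂ, ∀ X₂ : Matrix B₂ B₂ ℂ,
      X₁.PosSemidef → X₂.PosSemidef →
      (Γ₁ - (1 : Matrix A₁ A₁ ℂ) ⊗ₖ X₁).PosSemidef →
      (Γ₂ - (1 : Matrix A₂ A₂ ℂ) ⊗ₖ X₂).PosSemidef →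
      ((Matrix.reindex (Equiv.prodProdProdComm A₁ B₁ A₂ B₂)
            (Equiv.prodProdProdComm A₁ B₁ A₂ B₂) (Γ₁ ⊗ₖ Γ₂))
        - (1 : Matrix (A₁ × A₂) (A₁ × A₂) ℂ) ⊗ₖ (X₁ ⊗ₖ X₂)).PosSemidef) ∧
    ((∃ X₁ : Matrix B₁ B₁ ℂ, X₁.PosSemidef ∧
        (Γ₁ - (1 : Matrix A₁ A₁ ℂ) ⊗ₖ X₁).PosSemidef ∧ X₁.trace.re = doeblin Γ₁) →
     (∃ X₂ : Matrix B₂ B₂ ℂ, X₂.PosSemidef ∧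
        (Γ₂ - (1 : Matrix A₂ A₂ ℂ) ⊗ₖ X₂).PosSemidef ∧ X₂.trace.re = doeblin Γ₂) →
      doeblin (Matrix.reindex (Equiv.prodProdProdComm A₁ B₁ A₂ B₂)
          (Equiv.prodProdProdComm A₁ B₁ A₂ B₂) (Γ₁ ⊗ₖ Γ₂))
        = doeblin Γ₁ * doeblin Γ₂) := by
  refine ⟨fun X₁ X₂ hX₁ _ hf₁ hf₂ => posSemidef_reindex_kronecker_sub_one_kronecker h₂ hX₁ hf₁ hf₂,
    ?_⟩
  rintro ⟨X₁, hX₁, hf₁, hα₁⟩ ⟨X₂, hX₂, hf₂, hα₂⟩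
  refine (doeblin_reindex_kronecker_le h₁ h₂).antisymm ?_
  have hle := re_trace_le_doeblin (hX₁.kronecker hX₂).isHermitian
    (posSemidef_reindex_kronecker_sub_one_kronecker h₂ hX₁ hf₁ hf₂)
  have him₁ := (Complex.nonneg_iff.mp hX₁.trace_nonneg).2
  rwa [trace_kronecker, Complex.mul_re, ← him₁, zero_mul, sub_zero, hα₁, hα₂] at hle

/-- (i) If `X₁, X₂ ≥ 0` are feasible, `I ⊗ X₁ ≤ Γ₁` and `I ⊗ X₂ ≤ Γ₂`, then after the
natural reordering of tensor factors `I ⊗ (X₁ ⊗ X₂) ≤ Γ₁ ⊗ Γ₂`.  (ii) Consequently, if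
`α(N₁)` and `α(N₂)` are each attained by positive semidefinite optimizers, then
`α(N₁ ⊗ N₂) = α(N₁) α(N₂)`. -/
theorem stmt14 {A₁ B₁ A₂ B₂ : Type}
    [Fintype A₁] [Fintype B₁] [Fintype A₂] [Fintype B₂]
    [DecidableEq A₁] [DecidableEq B₁] [DecidableEq A₂] [DecidableEq B₂]
    [Nonempty A₁] [Nonempty A₂]
    (Γ₁ : Matrix (A₁ × B₁) (A₁ × B₁) ℂ) (Γ₂ : Matrix (A₂ × B₂) (A₂ × B₂) ℂ)
    (h₁ : Γ₁.PosSemidef) (h₂ : Γ₂.PosSemidef)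
    (hTP₁ : traceOutSnd Γ₁ = 1) (hTP₂ : traceOutSnd Γ₂ = 1) :
    (∀ X₁ : Matrix B₁ B₁ ℂ, ∀ X₂ : Matrix B₂ B₂ ℂ,
      X₁.PosSemidef → X₂.PosSemidef →
      (Γ₁ - (1 : Matrix A₁ A₁ ℂ) ⊗ₖ X₁).PosSemidef →
      (Γ₂ - (1 : Matrix A₂ A₂ ℂ) ⊗ₖ X₂).PosSemidef →
      ((Matrix.reindex (Equiv.prodProdProdComm A₁ B₁ A₂ B₂)
            (Equiv.prodProdProdComm A₁ B₁ A₂ B₂) (Γ₁ ⊗ₖ Γ₂))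
        - (1 : Matrix (A₁ × A₂) (A₁ × A₂) ℂ) ⊗ₖ (X₁ ⊗ₖ X₂)).PosSemidef) ∧
    ((∃ X₁ : Matrix B₁ B₁ ℂ, X₁.PosSemidef ∧
        (Γ₁ - (1 : Matrix A₁ A₁ ℂ) ⊗ₖ X₁).PosSemidef ∧ X₁.trace.re = doeblin Γ₁) →
     (∃ X₂ : Matrix B₂ B₂ ℂ, X₂.PosSemidef ∧
        (Γ₂ - (1 : Matrix A₂ A₂ ℂ) ⊗ₖ X₂).PosSemidef ∧ X₂.trace.re = doeblin Γ₂) →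
      doeblin (Matrix.reindex (Equiv.prodProdProdComm A₁ B₁ A₂ B₂)
          (Equiv.prodProdProdComm A₁ B₁ A₂ B₂) (Γ₁ ⊗ₖ Γ₂))
        = doeblin Γ₁ * doeblin Γ₂) :=
  stmt14_general Γ₁ Γ₂ h₁ h₂
end

section
/- For the generalized amplitude damping channel N_{p,η} (with parameters p ∈ [0,1], η ∈ [0,1]), the quantum Doeblin coefficient equals (1 − √η)², independent of p. -/
open Matrix
open scoped Kronecker ComplexOrder

/-- The Kraus operators of the generalized amplitude damping channel `N_{p,η}`. -/
noncomputable def gadKraus (p η : ℝ) : Fin 4 → Matrix (Fin 2) (Fin 2) ℂ :=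
  ![(Real.sqrt p : ℂ) • !![1, 0; 0, (Real.sqrt η : ℂ)],
    (Real.sqrt p : ℂ) • !![0, (Real.sqrt (1 - η) : ℂ); 0, 0],
    (Real.sqrt (1 - p) : ℂ) • !![(Real.sqrt η : ℂ), 0; 0, 1],
    (Real.sqrt (1 - p) : ℂ) • !![0, 0; (Real.sqrt (1 - η) : ℂ), 0]]

/-- The generalized amplitude damping channel applied to a matrix. -/
noncomputable def gadApply (p η : ℝ) (ρ : Matrix (Fin 2) (Fin 2) ℂ) :
    Matrix (Fin 2) (Fin 2) ℂ :=
  ∑ k : Fin 4, gadKraus p η k * ρ * (gadKraus p η k)ᴴ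

/-- The Choi matrix of the generalized amplitude damping channel. -/
noncomputable def gadChoi (p η : ℝ) : Matrix (Fin 2 × Fin 2) (Fin 2 × Fin 2) ℂ :=
  ∑ i : Fin 2, ∑ j : Fin 2,
    Matrix.single i j (1 : ℂ) ⊗ₖ gadApply p η (Matrix.single i j (1 : ℂ))

/-!
The Doeblin coefficient is the value of the SDP `max Tr X` subject to `Γ ≥ 1 ⊗ X`.
For the diagonal witness `X` the slack `Γ - 1 ⊗ X` equals `√η |Φ⟩⟨Φ| + (√η - η)(|01⟩⟨01| + |10⟩⟨10|)`
with `Φ = |00⟩ + |11⟩`, which is positive since `η ≤ √η`, and `Tr X = (1 - √η)²`.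
Conversely, `|00⟩ - |11⟩` is the vectorisation of a unitary, so its expectation in `1 ⊗ X` is
`Tr X`; positivity of the slack on it bounds `Tr X` by `(⟨00| - ⟨11|) Γ (|00⟩ - |11⟩) = (1 - √η)²`.
-/
theorem re_trace_le_of_posSemidef_sub_one_kronecker {dA dB : Type*} [Fintype dA] [Fintype dB]
    [DecidableEq dA] [DecidableEq dB] {Γ : Matrix (dA × dB) (dA × dB) ℂ} {X : Matrix dB dB ℂ}
    (hΓX : (Γ - 1 ⊗ₖ X).PosSemidef) {V : Matrix dB dA ℂ} (hV : V * Vᴴ = 1) :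
    X.trace.re ≤ (star (vec V) ⬝ᵥ Γ *ᵥ vec V).re := by
  have hX : star (vec V) ⬝ᵥ (1 ⊗ₖ X) *ᵥ vec V = X.trace := by
    rw [kronecker_mulVec_vec, transpose_one, Matrix.mul_one, star_vec_dotProduct_vec,
      trace_mul_comm, Matrix.mul_assoc, hV, Matrix.mul_one]
  have h := (Complex.le_def.mp (hΓX.dotProduct_mulVec_nonneg (vec V))).1
  rw [sub_mulVec, dotProduct_sub, hX] at h
  simpa [sub_nonneg] using h

theorem sum_single_kronecker_apply {R n m : Type*} [Semiring R] [Fintype n] [DecidableEq n]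
    (f : Matrix n n R → Matrix m m R) (i j : n) (k l : m) :
    (∑ a, ∑ b, single a b (1 : R) ⊗ₖ f (single a b 1)) (i, k) (j, l) = f (single i j 1) k l := by
  simp [Matrix.sum_apply, kroneckerMap_apply, single_apply, ite_and]

section

variable {p η : ℝ}

theorem gadApply_eq (hp : p ∈ Set.Icc (0:ℝ) 1) (hη : η ∈ Set.Icc (0:ℝ) 1)
    (ρ : Matrix (Fin 2) (Fin 2) ℂ) :
    gadApply p η ρ =
      !![(p + (1 - p) * η) * ρ 0 0 + p * (1 - η) * ρ 1 1, √η * ρ 0 1;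
         √η * ρ 1 0, (1 - p) * (1 - η) * ρ 0 0 + (p * η + (1 - p)) * ρ 1 1] := by
  obtain ⟨hp0, hp1⟩ := hp
  obtain ⟨hη0, hη1⟩ := hη
  have sq : ∀ {x : ℝ}, 0 ≤ x → (√x : ℂ) ^ 2 = x := fun hx => by
    norm_cast; exact Real.sq_sqrt hx
  have hp_sq := sq hp0
  have hη_sq := sq hη0
  have hp'_sq := sq (sub_nonneg.mpr hp1)
  have hη'_sq := sq (sub_nonneg.mpr hη1)
  push_cast at hp'_sq hη'_sq
  ext k l
  fin_cases k <;> fin_cases l <;>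
    simp [gadApply, gadKraus, Fin.sum_univ_four, Matrix.mul_apply, Fin.sum_univ_two, vecMul,
      dotProduct] <;>
    ring_nf <;> simp only [hp_sq, hη_sq, hp'_sq, hη'_sq] <;> ring

theorem gadChoi_apply (i j k l : Fin 2) :
    gadChoi p η (i, k) (j, l) = gadApply p η (single i j 1) k l :=
  sum_single_kronecker_apply _ i j k l

noncomputable def gadPrimal (p η : ℝ) : Matrix (Fin 2) (Fin 2) ℂ :=
  diagonal fun b => ((![p + (1 - p) * η - √η, p * η + (1 - p) - √η] b : ℝ) : ℂ)

theorem gadPrimal_isHermitian : (gadPrimal p η).IsHermitian :=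
  isHermitian_diagonal_of_self_adjoint _ (by ext; simp)

theorem re_trace_gadPrimal (hη : 0 ≤ η) : (gadPrimal p η).trace.re = (1 - √η) ^ 2 :=
  calc (gadPrimal p η).trace.re = (p + (1 - p) * η - √η) + (p * η + (1 - p) - √η) := by
        simp [gadPrimal, trace, Fin.sum_univ_two]
    _ = (1 - √η) ^ 2 := by rw [sub_sq, Real.sq_sqrt hη]; ring

theorem gadChoi_sub_one_kronecker_gadPrimal (hp : p ∈ Set.Icc (0:ℝ) 1)
    (hη : η ∈ Set.Icc (0:ℝ) 1) :
    gadChoi p η - 1 ⊗ₖ gadPrimal p η =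
      (√η : ℂ) • vecMulVec (vec 1) (star (vec 1)) +
        diagonal fun x => if x.1 = x.2 then 0 else ((√η - η : ℝ) : ℂ) := by
  ext ⟨i, k⟩ ⟨j, l⟩
  fin_cases i <;> fin_cases j <;> fin_cases k <;> fin_cases l <;>
    simp [gadChoi_apply, gadApply_eq hp hη, gadPrimal, vecMulVec_apply, one_apply] <;> ring

theorem gadChoi_sub_one_kronecker_gadPrimal_posSemidef (hp : p ∈ Set.Icc (0:ℝ) 1)
    (hη : η ∈ Set.Icc (0:ℝ) 1) : (gadChoi p η - 1 ⊗ₖ gadPrimal p η).PosSemidef := by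
  rw [gadChoi_sub_one_kronecker_gadPrimal hp hη]
  refine ((posSemidef_vecMulVec_self_star _).smul ?_).add (posSemidef_diagonal_iff.mpr ?_)
  · exact Complex.zero_le_real.mpr (Real.sqrt_nonneg η)
  · intro x
    split_ifs
    · exact le_rfl
    · exact Complex.zero_le_real.mpr (sub_nonneg.mpr (Real.le_sqrt_self_iff.mpr hη.2))

theorem re_star_vec_dotProduct_gadChoi_mulVec_vec (hp : p ∈ Set.Icc (0:ℝ) 1)
    (hη : η ∈ Set.Icc (0:ℝ) 1) :
    (star (vec (diagonal ![1, -1])) ⬝ᵥ gadChoi p η *ᵥ vec (diagonal ![(1 : ℂ), -1])).re =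
      (1 - √η) ^ 2 := by
  calc _ = (p + (1 - p) * η) + (p * η + (1 - p)) - 2 * √η := by
        simp [dotProduct, mulVec, Fintype.sum_prod_type, Fin.sum_univ_two, gadChoi_apply,
          gadApply_eq hp hη]
        ring
    _ = (1 - √η) ^ 2 := by rw [sub_sq, Real.sq_sqrt hη.1]; ring

end

/-- The quantum Doeblin coefficient of the generalized amplitude damping channel `N_{p,η}`
equals `(1 − √η)²`, independently of `p`. -/
theorem stmt15 (p η : ℝ) (hp : p ∈ Set.Icc (0:ℝ) 1) (hη : η ∈ Set.Icc (0:ℝ) 1) :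
    doeblin (gadChoi p η) = (1 - Real.sqrt η) ^ 2 := by
  refine IsGreatest.csSup_eq ⟨⟨gadPrimal p η, gadPrimal_isHermitian,
    gadChoi_sub_one_kronecker_gadPrimal_posSemidef hp hη, (re_trace_gadPrimal hη.1).symm⟩, ?_⟩
  rintro _ ⟨X, -, hX, rfl⟩
  have hV : diagonal ![(1 : ℂ), -1] * (diagonal ![(1 : ℂ), -1])ᴴ = 1 := by
    rw [diagonal_conjTranspose, diagonal_mul_diagonal, ← diagonal_one]
    congr 1
    ext i
    fin_cases i <;> simp
  calc X.trace.re ≤ _ := re_trace_le_of_posSemidef_sub_one_kronecker hX hV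
    _ = (1 - √η) ^ 2 := re_star_vec_dotProduct_gadChoi_mulVec_vec hp hη
end
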